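/- Correctness of the backward (smoothing) algorithm for a recurrent autoregressive hidden Markov model (Proposition 2, composite form): fix an observation sequence x_{1:T}, and define vectors ζ_t ∈ ℝ^K by the backward recursion ζ_T(k) = P(z_T = k | x_{1:T}) and, for t = T−1, T−2, …, 1, ζ_t(k) = P(z_t = k | x_{1:t}) · Σ_{k'=1}^{K} A_{t+1}(k' | k, x_{1:t}) · ζ_{t+1}(k') / P(z_{t+1} = k' | x_{1:t}). Then for every t with 1 ≤ t ≤ T and every k ∈ {1,…,K}, ζ_t(k) = P(z_t = k | x_{1:T}). -/

import Mathlib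

open Finset
open scoped Classical

namespace RARHMM

instance {n : ℕ} [NeZero n] : Nonempty (Fin n) :=
  ⟨⟨0, Nat.pos_of_ne_zero (NeZero.ne n)⟩⟩

/-- Extend a sequence indexed by `Fin T` to all of `ℕ`, using an arbitrary
value beyond `T`. -/
noncomputable def extSeq {α : Type*} [Nonempty α] {T : ℕ} (f : Fin T → α) (i : ℕ) : α :=
  if h : i < T then f ⟨i, h⟩ else Classical.arbitrary α

variable {𝒳 : Type*}

/-- Joint pmf of a recurrent autoregressive HMM on internal times `0, …, T-1`
(representing the paper's times `1, …, T`).  The transition kernel `A t` and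
the emission kernel `η t` may read the observation sequence only at indices
`< t` (this is enforced by `IsRARHMM.A_dep` and `IsRARHMM.eta_dep` below). -/
noncomputable def joint {K : ℕ} (T : ℕ) (π : Fin K → ℝ)
    (A : ℕ → Fin K → (ℕ → 𝒳) → Fin K → ℝ)
    (η : ℕ → Fin K → (ℕ → 𝒳) → 𝒳 → ℝ)
    (z : ℕ → Fin K) (x : ℕ → 𝒳) : ℝ :=
  π (z 0) * η 0 (z 0) x (x 0) *
    ∏ t ∈ Finset.Ico 1 T, (A t (z (t - 1)) x (z t) * η t (z t) x (x t))

/-- Probability of an event `E` (a predicate of the full state sequence and the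
full observation sequence) under the rARHMM. -/
noncomputable def prob {K : ℕ} [NeZero K] [Fintype 𝒳] [Nonempty 𝒳] (T : ℕ)
    (π : Fin K → ℝ)
    (A : ℕ → Fin K → (ℕ → 𝒳) → Fin K → ℝ)
    (η : ℕ → Fin K → (ℕ → 𝒳) → 𝒳 → ℝ)
    (E : (ℕ → Fin K) → (ℕ → 𝒳) → Prop) : ℝ :=
  ∑ z : Fin T → Fin K, ∑ xs : Fin T → 𝒳,
    if E (extSeq z) (extSeq xs) then joint T π A η (extSeq z) (extSeq xs) else 0

/-- Conditional probability `P(E | F)` under the rARHMM, defined as a ratio of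
(marginal) probabilities. -/
noncomputable def condProb {K : ℕ} [NeZero K] [Fintype 𝒳] [Nonempty 𝒳] (T : ℕ)
    (π : Fin K → ℝ)
    (A : ℕ → Fin K → (ℕ → 𝒳) → Fin K → ℝ)
    (η : ℕ → Fin K → (ℕ → 𝒳) → 𝒳 → ℝ)
    (E F : (ℕ → Fin K) → (ℕ → 𝒳) → Prop) : ℝ :=
  prob T π A η (fun z x => E z x ∧ F z x) / prob T π A η F

/-- The event that the observation sequence agrees with `x` at all indices `< t`
(the paper's conditioning event `x_{1:t}`). -/
def obsAgree {K : ℕ} (x : ℕ → 𝒳) (t : ℕ) : (ℕ → Fin K) → (ℕ → 𝒳) → Prop :=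
  fun _ xs => ∀ i, i < t → xs i = x i

/-- `(π, A, η)` is a recurrent autoregressive hidden Markov model on internal
times `0, …, T-1`: the initial distribution `π`, the transition kernels `A t`
(for `1 ≤ t ≤ T-1`) and the emission kernels `η t` (for `0 ≤ t ≤ T-1`) are
probability distributions, and the kernels at time `t` depend on the
observation sequence only through the indices `< t` (i.e. on `x_{1:(t-1)}`
in the paper's 1-indexed notation). -/
structure IsRARHMM {K : ℕ} [Fintype 𝒳] (T : ℕ) (π : Fin K → ℝ)
    (A : ℕ → Fin K → (ℕ → 𝒳) → Fin K → ℝ)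
    (η : ℕ → Fin K → (ℕ → 𝒳) → 𝒳 → ℝ) : Prop where
  pi_nonneg : ∀ k, 0 ≤ π k
  pi_sum : ∑ k, π k = 1
  A_nonneg : ∀ t k x k', 0 ≤ A t k x k'
  A_sum : ∀ t, 1 ≤ t → t < T → ∀ k x, ∑ k', A t k x k' = 1
  A_dep : ∀ t k x x', (∀ i, i < t → x i = x' i) → A t k x = A t k x'
  eta_nonneg : ∀ t k x o, 0 ≤ η t k x o
  eta_sum : ∀ t, t < T → ∀ k x, ∑ o, η t k x o = 1
  eta_dep : ∀ t k x x', (∀ i, i < t → x i = x' i) → η t k x = η t k x'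

set_option linter.unusedSectionVars false

section Aux

variable {𝒳 : Type*} [Fintype 𝒳] [Nonempty 𝒳] {K : ℕ} [NeZero K]
variable {T : ℕ} {π : Fin K → ℝ} {A : ℕ → Fin K → (ℕ → 𝒳) → Fin K → ℝ}
  {η : ℕ → Fin K → (ℕ → 𝒳) → 𝒳 → ℝ}

lemma joint_nonneg (h : IsRARHMM T π A η) (m : ℕ) (z : ℕ → Fin K) (xs : ℕ → 𝒳) :
    0 ≤ joint m π A η z xs := by
  unfold joint
  refine mul_nonneg (mul_nonneg (h.pi_nonneg _) (h.eta_nonneg _ _ _ _)) ?_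
  exact Finset.prod_nonneg fun t _ => mul_nonneg (h.A_nonneg _ _ _ _) (h.eta_nonneg _ _ _ _)

lemma prob_nonneg (h : IsRARHMM T π A η) (m : ℕ)
    (E : (ℕ → Fin K) → (ℕ → 𝒳) → Prop) : 0 ≤ prob m π A η E := by
  refine Finset.sum_nonneg fun z _ => Finset.sum_nonneg fun xs _ => ?_
  split
  · exact joint_nonneg h _ _ _
  · exact le_refl 0

lemma prob_mono (h : IsRARHMM T π A η) (m : ℕ)
    {E F : (ℕ → Fin K) → (ℕ → 𝒳) → Prop}
    (hEF : ∀ z xs, E z xs → F z xs) : prob m π A η E ≤ prob m π A η F := by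
  refine Finset.sum_le_sum fun z _ => Finset.sum_le_sum fun xs _ => ?_
  by_cases hE : E (extSeq z) (extSeq xs)
  · rw [if_pos hE, if_pos (hEF _ _ hE)]
  · rw [if_neg hE]
    split
    · exact joint_nonneg h _ _ _
    · exact le_refl 0

lemma prob_congr {m : ℕ} {E F : (ℕ → Fin K) → (ℕ → 𝒳) → Prop}
    (hEF : ∀ z xs, E z xs ↔ F z xs) : prob m π A η E = prob m π A η F := by
  refine Finset.sum_congr rfl fun z _ => Finset.sum_congr rfl fun xs _ => ?_
  rw [if_congr (hEF _ _) rfl rfl]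

lemma joint_congr (h : IsRARHMM T π A η) {m : ℕ} (hm : 1 ≤ m)
    {z z' : ℕ → Fin K} {xs xs' : ℕ → 𝒳}
    (hz : ∀ i, i < m → z i = z' i) (hx : ∀ i, i < m → xs i = xs' i) :
    joint m π A η z xs = joint m π A η z' xs' := by
  unfold joint
  rw [hz 0 hm, hx 0 hm, h.eta_dep 0 (z' 0) xs xs' (fun i hi => absurd hi (Nat.not_lt_zero i))]
  congr 1
  refine Finset.prod_congr rfl fun t ht => ?_
  simp only [Finset.mem_Ico] at ht
  rw [hz (t - 1) (by omega), hz t ht.2, hx t ht.2,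
    h.A_dep t (z' (t - 1)) xs xs' (fun i hi => hx i (by omega)),
    h.eta_dep t (z' t) xs xs' (fun i hi => hx i (by omega))]

lemma sum_snoc {α M : Type*} [Fintype α] [AddCommMonoid M] {n : ℕ}
    (g : (Fin (n + 1) → α) → M) :
    ∑ f : Fin (n + 1) → α, g f = ∑ f : Fin n → α, ∑ a : α, g (Fin.snoc f a) := by
  rw [← (Fin.snocEquiv (fun _ => α)).sum_comp g]
  rw [Fintype.sum_prod_type]
  exact Finset.sum_comm

lemma extSeq_snoc_lt {α : Type*} [Nonempty α] {n : ℕ} (f : Fin n → α) (a : α) {i : ℕ}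
    (hi : i < n) : extSeq (Fin.snoc f a) i = extSeq f i := by
  simp only [extSeq, dif_pos hi, dif_pos (Nat.lt_succ_of_lt hi)]
  simp [Fin.snoc, hi]

lemma extSeq_snoc_last {α : Type*} [Nonempty α] {n : ℕ} (f : Fin n → α) (a : α) :
    extSeq (Fin.snoc f a) n = a := by
  simp only [extSeq, dif_pos (Nat.lt_succ_self n)]
  simp [Fin.snoc]
lemma prob_succ_eq (h : IsRARHMM T π A η) {m : ℕ} (hm1 : 1 ≤ m) (hmT : m < T)
    (S : (ℕ → Fin K) → (ℕ → 𝒳) → Prop)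
    (hS : ∀ z z' xs xs', (∀ i, i < m → z i = z' i) → (∀ i, i < m → xs i = xs' i) →
      (S z xs ↔ S z' xs')) :
    prob (m + 1) π A η S = prob m π A η S := by
  unfold prob
  simp only [sum_snoc]
  refine Finset.sum_congr rfl fun z _ => ?_
  rw [Finset.sum_comm]
  refine Finset.sum_congr rfl fun xs _ => ?_
  have hzag : ∀ zm : Fin K, ∀ i, i < m → extSeq (Fin.snoc z zm) i = extSeq z i :=
    fun zm i hi => extSeq_snoc_lt z zm hi
  have hxag : ∀ xm : 𝒳, ∀ i, i < m → extSeq (Fin.snoc xs xm) i = extSeq xs i :=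
    fun xm i hi => extSeq_snoc_lt xs xm hi
  have hCond : ∀ (zm : Fin K) (xm : 𝒳),
      S (extSeq (Fin.snoc z zm)) (extSeq (Fin.snoc xs xm)) ↔ S (extSeq z) (extSeq xs) :=
    fun zm xm => hS _ _ _ _ (hzag zm) (hxag xm)
  have hJ : ∀ (zm : Fin K) (xm : 𝒳),
      joint (m + 1) π A η (extSeq (Fin.snoc z zm)) (extSeq (Fin.snoc xs xm))
        = joint m π A η (extSeq z) (extSeq xs) *
            (A m (extSeq z (m - 1)) (extSeq xs) zm * η m zm (extSeq xs) xm) := by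
    intro zm xm
    have e1 : joint (m + 1) π A η (extSeq (Fin.snoc z zm)) (extSeq (Fin.snoc xs xm))
        = joint m π A η (extSeq (Fin.snoc z zm)) (extSeq (Fin.snoc xs xm)) *
            (A m (extSeq (Fin.snoc z zm) (m - 1)) (extSeq (Fin.snoc xs xm))
                (extSeq (Fin.snoc z zm) m) *
              η m (extSeq (Fin.snoc z zm) m) (extSeq (Fin.snoc xs xm))
                (extSeq (Fin.snoc xs xm) m)) := by
      unfold joint
      rw [Finset.prod_Ico_succ_top hm1]
      ring
    rw [e1, joint_congr h hm1 (hzag zm) (hxag xm), hzag zm (m - 1) (by omega),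
      extSeq_snoc_last, extSeq_snoc_last,
      h.A_dep m (extSeq z (m - 1)) (extSeq (Fin.snoc xs xm)) (extSeq xs)
        (fun i hi => hxag xm i hi),
      h.eta_dep m zm (extSeq (Fin.snoc xs xm)) (extSeq xs) (fun i hi => hxag xm i hi)]
  by_cases hC : S (extSeq z) (extSeq xs)
  · rw [if_pos hC]
    calc ∑ zm : Fin K, ∑ xm : 𝒳,
          (if S (extSeq (Fin.snoc z zm)) (extSeq (Fin.snoc xs xm)) then
            joint (m + 1) π A η (extSeq (Fin.snoc z zm)) (extSeq (Fin.snoc xs xm)) else 0)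
        = ∑ zm : Fin K, ∑ xm : 𝒳,
            joint m π A η (extSeq z) (extSeq xs) * A m (extSeq z (m - 1)) (extSeq xs) zm *
              η m zm (extSeq xs) xm := by
          refine Finset.sum_congr rfl fun zm _ => Finset.sum_congr rfl fun xm _ => ?_
          rw [if_pos ((hCond zm xm).mpr hC), hJ zm xm, mul_assoc]
      _ = joint m π A η (extSeq z) (extSeq xs) := by
          have e2 : ∀ zm : Fin K, ∑ xm : 𝒳,
              joint m π A η (extSeq z) (extSeq xs) * A m (extSeq z (m - 1)) (extSeq xs) zm *
                η m zm (extSeq xs) xm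
              = joint m π A η (extSeq z) (extSeq xs) *
                  A m (extSeq z (m - 1)) (extSeq xs) zm := by
            intro zm
            rw [← Finset.mul_sum, h.eta_sum m hmT zm (extSeq xs), mul_one]
          rw [Finset.sum_congr rfl fun zm _ => e2 zm, ← Finset.mul_sum,
            h.A_sum m hm1 hmT (extSeq z (m - 1)) (extSeq xs), mul_one]
  · rw [if_neg hC]
    refine Finset.sum_eq_zero fun zm _ => Finset.sum_eq_zero fun xm _ => ?_
    rw [if_neg (fun hc => hC ((hCond zm xm).mp hc))]

lemma prob_eq_of_dep (h : IsRARHMM T π A η) {m : ℕ} (hm1 : 1 ≤ m) (hmT : m ≤ T)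
    (S : (ℕ → Fin K) → (ℕ → 𝒳) → Prop)
    (hS : ∀ z z' xs xs', (∀ i, i < m → z i = z' i) → (∀ i, i < m → xs i = xs' i) →
      (S z xs ↔ S z' xs')) :
    prob T π A η S = prob m π A η S := by
  have main : ∀ n, m ≤ n → n ≤ T → prob n π A η S = prob m π A η S := by
    intro n hn
    induction n, hn using Nat.le_induction with
    | base => intro _; rfl
    | succ n hn ih =>
      intro hnT
      have hnT' : n < T := by omega
      rw [prob_succ_eq h (le_trans hm1 hn) hnT' S
        (fun z z' xs xs' hz hx => hS z z' xs xs' (fun i hi => hz i (by omega))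
          (fun i hi => hx i (by omega))), ih (by omega)]
  exact main T (by omega) (le_refl T)
lemma prob_succ_pin (h : IsRARHMM T π A η) {m : ℕ} (hm1 : 1 ≤ m) (hmT : m < T)
    (x : ℕ → 𝒳) (k k' : Fin K)
    (S : (ℕ → Fin K) → (ℕ → 𝒳) → Prop)
    (hS : ∀ z z' xs xs', (∀ i, i < m → z i = z' i) → (∀ i, i < m → xs i = xs' i) →
      (S z xs ↔ S z' xs'))
    (hpin : ∀ z xs, S z xs → z (m - 1) = k ∧ ∀ i, i < m → xs i = x i) :
    prob (m + 1) π A η (fun z xs => z m = k' ∧ S z xs)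
      = A m k x k' * prob m π A η S := by
  unfold prob
  simp only [sum_snoc]
  rw [Finset.mul_sum]
  refine Finset.sum_congr rfl fun z _ => ?_
  rw [Finset.sum_comm, Finset.mul_sum]
  refine Finset.sum_congr rfl fun xs _ => ?_
  have hzag : ∀ zm : Fin K, ∀ i, i < m → extSeq (Fin.snoc z zm) i = extSeq z i :=
    fun zm i hi => extSeq_snoc_lt z zm hi
  have hxag : ∀ xm : 𝒳, ∀ i, i < m → extSeq (Fin.snoc xs xm) i = extSeq xs i :=
    fun xm i hi => extSeq_snoc_lt xs xm hi
  have hCond : ∀ (zm : Fin K) (xm : 𝒳),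
      S (extSeq (Fin.snoc z zm)) (extSeq (Fin.snoc xs xm)) ↔ S (extSeq z) (extSeq xs) :=
    fun zm xm => hS _ _ _ _ (hzag zm) (hxag xm)
  have hJ : ∀ (zm : Fin K) (xm : 𝒳),
      joint (m + 1) π A η (extSeq (Fin.snoc z zm)) (extSeq (Fin.snoc xs xm))
        = joint m π A η (extSeq z) (extSeq xs) *
            (A m (extSeq z (m - 1)) (extSeq xs) zm * η m zm (extSeq xs) xm) := by
    intro zm xm
    have e1 : joint (m + 1) π A η (extSeq (Fin.snoc z zm)) (extSeq (Fin.snoc xs xm))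
        = joint m π A η (extSeq (Fin.snoc z zm)) (extSeq (Fin.snoc xs xm)) *
            (A m (extSeq (Fin.snoc z zm) (m - 1)) (extSeq (Fin.snoc xs xm))
                (extSeq (Fin.snoc z zm) m) *
              η m (extSeq (Fin.snoc z zm) m) (extSeq (Fin.snoc xs xm))
                (extSeq (Fin.snoc xs xm) m)) := by
      unfold joint
      rw [Finset.prod_Ico_succ_top hm1]
      ring
    rw [e1, joint_congr h hm1 (hzag zm) (hxag xm), hzag zm (m - 1) (by omega),
      extSeq_snoc_last, extSeq_snoc_last,
      h.A_dep m (extSeq z (m - 1)) (extSeq (Fin.snoc xs xm)) (extSeq xs)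
        (fun i hi => hxag xm i hi),
      h.eta_dep m zm (extSeq (Fin.snoc xs xm)) (extSeq xs) (fun i hi => hxag xm i hi)]
  by_cases hC : S (extSeq z) (extSeq xs)
  · rw [if_pos hC]
    obtain ⟨hzk, hxx⟩ := hpin _ _ hC
    trans (∑ zm : Fin K, (if zm = k' then
        joint m π A η (extSeq z) (extSeq xs) * A m (extSeq z (m - 1)) (extSeq xs) zm else 0))
    · refine Finset.sum_congr rfl fun zm _ => ?_
      by_cases hzm : zm = k'
      · rw [if_pos hzm]
        refine Eq.trans (Finset.sum_congr rfl fun xm _ => ?_)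
          (?_ : (∑ xm : 𝒳, joint m π A η (extSeq z) (extSeq xs) *
            A m (extSeq z (m - 1)) (extSeq xs) zm * η m zm (extSeq xs) xm) = _)
        · rw [if_pos ⟨(extSeq_snoc_last z zm).trans hzm, (hCond zm xm).mpr hC⟩, hJ zm xm,
            mul_assoc]
        · rw [← Finset.mul_sum, h.eta_sum m hmT zm (extSeq xs), mul_one]
      · rw [if_neg hzm]
        refine Finset.sum_eq_zero fun xm _ => ?_
        exact if_neg (fun hc => hzm (((extSeq_snoc_last z zm).symm.trans hc.1)))
    · rw [Finset.sum_ite_eq' Finset.univ k'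
        (fun zm => joint m π A η (extSeq z) (extSeq xs) *
          A m (extSeq z (m - 1)) (extSeq xs) zm)]
      rw [if_pos (Finset.mem_univ k'), hzk, h.A_dep m k (extSeq xs) x hxx, mul_comm]
  · rw [if_neg hC, mul_zero]
    refine Finset.sum_eq_zero fun zm _ => Finset.sum_eq_zero fun xm _ => ?_
    rw [if_neg (fun hc => hC ((hCond zm xm).mp hc.2))]
def mseq {α : Type*} (c : ℕ) (f g : ℕ → α) : ℕ → α := fun i => if i < c then f i else g i

lemma mseq_lt {α : Type*} {c i : ℕ} (f g : ℕ → α) (hi : i < c) : mseq c f g i = f i :=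
  if_pos hi

lemma mseq_ge {α : Type*} {c i : ℕ} (f g : ℕ → α) (hi : ¬ i < c) : mseq c f g i = g i :=
  if_neg hi

def mergeF {α : Type*} (c : ℕ) {T : ℕ} (f g : Fin T → α) : Fin T → α :=
  fun i => if (i : ℕ) < c then f i else g i

lemma extSeq_mergeF {α : Type*} [Nonempty α] {c T : ℕ} (hc : c ≤ T) (f g : Fin T → α) :
    extSeq (mergeF c f g) = mseq c (extSeq f) (extSeq g) := by
  funext i
  by_cases hiT : i < T
  · by_cases hic : i < c
    · simp [extSeq, mergeF, mseq, hiT, hic]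
    · simp [extSeq, mergeF, mseq, hiT, hic]
  · have h2 : ¬ i < c := by omega
    simp [extSeq, mseq, hiT, h2]

lemma mergeF_invol {α : Type*} {c T : ℕ} (f g : Fin T → α) :
    mergeF c (mergeF c f g) (mergeF c g f) = f := by
  funext i
  by_cases hic : (i : ℕ) < c <;> simp [mergeF, hic]

lemma joint_split (hc1 : 1 ≤ c) (hcT : c < T) (z : ℕ → Fin K) (xs : ℕ → 𝒳) :
    joint T π A η z xs =
      (π (z 0) * η 0 (z 0) xs (xs 0) *
        ∏ s ∈ Finset.Ico 1 c, (A s (z (s - 1)) xs (z s) * η s (z s) xs (xs s))) *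
      A c (z (c - 1)) xs (z c) *
      (η c (z c) xs (xs c) *
        ∏ s ∈ Finset.Ico (c + 1) T, (A s (z (s - 1)) xs (z s) * η s (z s) xs (xs s))) := by
  unfold joint
  rw [← Finset.prod_Ico_consecutive _ hc1 hcT.le, Finset.prod_eq_prod_Ico_succ_bot hcT]
  ring

lemma joint_merge (h : IsRARHMM T π A η) {c : ℕ} (hc1 : 1 ≤ c) (hcT : c < T)
    {z z' : ℕ → Fin K} {xs xs' : ℕ → 𝒳}
    (hx : ∀ i, i < c → xs i = xs' i) (hz : z c = z' c) :
    joint T π A η (mseq c z z') (mseq c xs xs') =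
      (π (z 0) * η 0 (z 0) xs (xs 0) *
        ∏ s ∈ Finset.Ico 1 c, (A s (z (s - 1)) xs (z s) * η s (z s) xs (xs s))) *
      A c (z (c - 1)) xs (z c) *
      (η c (z' c) xs' (xs' c) *
        ∏ s ∈ Finset.Ico (c + 1) T, (A s (z' (s - 1)) xs' (z' s) * η s (z' s) xs' (xs' s))) := by
  rw [joint_split hc1 hcT]
  congr 1
  · congr 1
    · rw [mseq_lt _ _ hc1, mseq_lt _ _ hc1,
        h.eta_dep 0 (z 0) (mseq c xs xs') xs (fun i hi => absurd hi (Nat.not_lt_zero i))]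
      refine congrArg₂ _ rfl (Finset.prod_congr rfl fun s hs => ?_)
      simp only [Finset.mem_Ico] at hs
      rw [mseq_lt _ _ (by omega : s - 1 < c), mseq_lt _ _ hs.2, mseq_lt _ _ hs.2,
        h.A_dep s (z (s - 1)) (mseq c xs xs') xs (fun i hi => mseq_lt _ _ (by omega)),
        h.eta_dep s (z s) (mseq c xs xs') xs (fun i hi => mseq_lt _ _ (by omega))]
    · rw [mseq_lt _ _ (by omega : c - 1 < c), mseq_ge _ _ (lt_irrefl c), ← hz,
        h.A_dep c (z (c - 1)) (mseq c xs xs') xs (fun i hi => mseq_lt _ _ hi)]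
  · rw [mseq_ge _ _ (lt_irrefl c), mseq_ge _ _ (lt_irrefl c),
      h.eta_dep c (z' c) (mseq c xs xs') xs' (fun i hi => (mseq_lt _ _ hi).trans (hx i hi))]
    refine congrArg₂ _ rfl (Finset.prod_congr rfl fun s hs => ?_)
    simp only [Finset.mem_Ico] at hs
    have hs1 : ¬ s - 1 < c := by omega
    have hs2 : ¬ s < c := by omega
    have hdep : ∀ i, i < s → mseq c xs xs' i = xs' i := by
      intro i hi
      by_cases hic : i < c
      · rw [mseq_lt _ _ hic, hx i hic]
      · rw [mseq_ge _ _ hic]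
    rw [mseq_ge _ _ hs1, mseq_ge _ _ hs2, mseq_ge _ _ hs2,
      h.A_dep s (z' (s - 1)) (mseq c xs xs') xs' hdep,
      h.eta_dep s (z' s) (mseq c xs xs') xs' hdep]

lemma joint_swap (h : IsRARHMM T π A η) {c : ℕ} (hc1 : 1 ≤ c) (hcT : c < T)
    {z z' : ℕ → Fin K} {xs xs' : ℕ → 𝒳}
    (hx : ∀ i, i < c → xs i = xs' i) (hz : z c = z' c) :
    joint T π A η (mseq c z z') (mseq c xs xs') *
      joint T π A η (mseq c z' z) (mseq c xs' xs) =
    joint T π A η z xs * joint T π A η z' xs' := by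
  rw [joint_merge h hc1 hcT hx hz, joint_merge h hc1 hcT (fun i hi => (hx i hi).symm) hz.symm,
    joint_split hc1 hcT z xs, joint_split hc1 hcT z' xs']
  ring

lemma prob_mul_prob (E1 E2 : (ℕ → Fin K) → (ℕ → 𝒳) → Prop) :
    prob T π A η E1 * prob T π A η E2 =
      ∑ p : ((Fin T → Fin K) × (Fin T → 𝒳)) × ((Fin T → Fin K) × (Fin T → 𝒳)),
        (if E1 (extSeq p.1.1) (extSeq p.1.2) then
            joint T π A η (extSeq p.1.1) (extSeq p.1.2) else 0) *
        (if E2 (extSeq p.2.1) (extSeq p.2.2) then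
            joint T π A η (extSeq p.2.1) (extSeq p.2.2) else 0) := by
  rw [Fintype.sum_prod_type]
  dsimp only
  rw [← Finset.sum_mul_sum (f := fun p : (Fin T → Fin K) × (Fin T → 𝒳) => if E1 (extSeq p.1) (extSeq p.2) then joint T π A η (extSeq p.1) (extSeq p.2) else 0) (g := fun p : (Fin T → Fin K) × (Fin T → 𝒳) => if E2 (extSeq p.1) (extSeq p.2) then joint T π A η (extSeq p.1) (extSeq p.2) else 0)]
  unfold prob
  rw [Fintype.sum_prod_type, Fintype.sum_prod_type]
lemma ite_mul_ite_zero_of_not_and {P Q : Prop} [Decidable P] [Decidable Q] {a b : ℝ}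
    (hPQ : ¬(P ∧ Q)) : (if P then a else 0) * (if Q then b else 0) = 0 := by
  rcases Classical.em P with hP | hP
  · rw [if_neg (fun hQ => hPQ ⟨hP, hQ⟩), mul_zero]
  · rw [if_neg hP, zero_mul]

lemma swap_identity (h : IsRARHMM T π A η) (x : ℕ → 𝒳) {t : ℕ} (ht : t + 1 < T)
    (k k' : Fin K) :
    prob T π A η (fun z xs => (z t = k ∧ z (t + 1) = k') ∧ obsAgree x T z xs) *
      prob T π A η (fun z xs => z (t + 1) = k' ∧ obsAgree x (t + 1) z xs)
    = prob T π A η (fun z xs => (z t = k ∧ z (t + 1) = k') ∧ obsAgree x (t + 1) z xs) *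
      prob T π A η (fun z xs => z (t + 1) = k' ∧ obsAgree x T z xs) := by
  rw [prob_mul_prob, prob_mul_prob]
  have hcT : t + 1 ≤ T := ht.le
  refine Fintype.sum_equiv
    ⟨fun p => ((mergeF (t + 1) p.1.1 p.2.1, mergeF (t + 1) p.1.2 p.2.2),
        (mergeF (t + 1) p.2.1 p.1.1, mergeF (t + 1) p.2.2 p.1.2)),
      fun p => ((mergeF (t + 1) p.1.1 p.2.1, mergeF (t + 1) p.1.2 p.2.2),
        (mergeF (t + 1) p.2.1 p.1.1, mergeF (t + 1) p.2.2 p.1.2)),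
      fun p => by simp only [mergeF_invol],
      fun p => by simp only [mergeF_invol]⟩ _ _ ?_
  rintro ⟨⟨u1, u2⟩, v1, v2⟩
  simp only [Equiv.coe_fn_mk]
  rw [extSeq_mergeF hcT, extSeq_mergeF hcT, extSeq_mergeF hcT, extSeq_mergeF hcT]
  by_cases hcond : ((extSeq u1 t = k ∧ extSeq u1 (t + 1) = k') ∧
      obsAgree x T (extSeq u1) (extSeq u2)) ∧
      (extSeq v1 (t + 1) = k' ∧ obsAgree x (t + 1) (extSeq v1) (extSeq v2))
  · obtain ⟨⟨⟨hu1t, hu1c⟩, hu2'⟩, hv1c, hv2'⟩ := hcond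
    have hu2 : ∀ i, i < T → extSeq u2 i = x i := hu2'
    have hv2 : ∀ i, i < t + 1 → extSeq v2 i = x i := hv2'
    rw [if_pos (show (extSeq u1 t = k ∧ extSeq u1 (t + 1) = k') ∧
          obsAgree x T (extSeq u1) (extSeq u2) from ⟨⟨hu1t, hu1c⟩, hu2'⟩),
      if_pos (show extSeq v1 (t + 1) = k' ∧
          obsAgree x (t + 1) (extSeq v1) (extSeq v2) from ⟨hv1c, hv2'⟩),
      if_pos (show (mseq (t + 1) (extSeq u1) (extSeq v1) t = k ∧
            mseq (t + 1) (extSeq u1) (extSeq v1) (t + 1) = k') ∧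
          obsAgree x (t + 1) (mseq (t + 1) (extSeq u1) (extSeq v1))
            (mseq (t + 1) (extSeq u2) (extSeq v2)) from
        ⟨⟨(mseq_lt _ _ (by omega)).trans hu1t,
          (mseq_ge _ _ (lt_irrefl (t + 1))).trans hv1c⟩,
          fun i hi => (mseq_lt _ _ hi).trans (hu2 i (by omega))⟩),
      if_pos (show mseq (t + 1) (extSeq v1) (extSeq u1) (t + 1) = k' ∧
          obsAgree x T (mseq (t + 1) (extSeq v1) (extSeq u1))
            (mseq (t + 1) (extSeq v2) (extSeq u2)) from
        ⟨(mseq_ge _ _ (lt_irrefl (t + 1))).trans hu1c,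
          fun i hi => by
            by_cases hic : i < t + 1
            · rw [mseq_lt _ _ hic]; exact hv2 i hic
            · rw [mseq_ge _ _ hic]; exact hu2 i hi⟩)]
    exact (joint_swap h (by omega) ht
      (fun i hi => (hu2 i (by omega)).trans (hv2 i hi).symm)
      (hu1c.trans hv1c.symm)).symm
  · have hcond' : ¬(((mseq (t + 1) (extSeq u1) (extSeq v1) t = k ∧
          mseq (t + 1) (extSeq u1) (extSeq v1) (t + 1) = k') ∧
        obsAgree x (t + 1) (mseq (t + 1) (extSeq u1) (extSeq v1))
          (mseq (t + 1) (extSeq u2) (extSeq v2))) ∧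
        (mseq (t + 1) (extSeq v1) (extSeq u1) (t + 1) = k' ∧
        obsAgree x T (mseq (t + 1) (extSeq v1) (extSeq u1))
          (mseq (t + 1) (extSeq v2) (extSeq u2)))) := by
      rintro ⟨⟨⟨h1, h2⟩, h3'⟩, h4, h5'⟩
      have h3 : ∀ i, i < t + 1 → mseq (t + 1) (extSeq u2) (extSeq v2) i = x i := h3'
      have h5 : ∀ i, i < T → mseq (t + 1) (extSeq v2) (extSeq u2) i = x i := h5'
      refine hcond ⟨⟨⟨(mseq_lt (extSeq u1) (extSeq v1) (by omega : t < t + 1)).symm.trans h1,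
        (mseq_ge (extSeq v1) (extSeq u1) (lt_irrefl (t + 1))).symm.trans h4⟩, ?_⟩,
        (mseq_ge (extSeq u1) (extSeq v1) (lt_irrefl (t + 1))).symm.trans h2, ?_⟩
      · intro i hi
        by_cases hic : i < t + 1
        · exact (mseq_lt (extSeq u2) (extSeq v2) hic).symm.trans (h3 i hic)
        · exact (mseq_ge (extSeq v2) (extSeq u2) hic).symm.trans (h5 i hi)
      · intro i hi
        exact (mseq_lt (extSeq v2) (extSeq u2) hi).symm.trans (h5 i (by omega))
    exact (ite_mul_ite_zero_of_not_and hcond).trans (ite_mul_ite_zero_of_not_and hcond').symm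
lemma prob_sum_mid (s : ℕ) (P Q : (ℕ → Fin K) → (ℕ → 𝒳) → Prop) :
    ∑ k' : Fin K, prob T π A η (fun z xs => (P z xs ∧ z s = k') ∧ Q z xs)
      = prob T π A η (fun z xs => P z xs ∧ Q z xs) := by
  unfold prob
  rw [Finset.sum_comm]
  refine Finset.sum_congr rfl fun z _ => ?_
  rw [Finset.sum_comm]
  refine Finset.sum_congr rfl fun xs _ => ?_
  by_cases hC : P (extSeq z) (extSeq xs) ∧ Q (extSeq z) (extSeq xs)
  · rw [if_pos hC]
    trans (∑ k' : Fin K, if extSeq z s = k' then joint T π A η (extSeq z) (extSeq xs) else 0)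
    · refine Finset.sum_congr rfl fun k' _ => ?_
      simp only [propext (show ((P (extSeq z) (extSeq xs) ∧ extSeq z s = k') ∧
          Q (extSeq z) (extSeq xs)) ↔ extSeq z s = k' from
        ⟨fun hh => hh.1.2, fun hk => ⟨⟨hC.1, hk⟩, hC.2⟩⟩)]
    · rw [Finset.sum_ite_eq Finset.univ (extSeq z s)
        (fun _ => joint T π A η (extSeq z) (extSeq xs)), if_pos (Finset.mem_univ _)]
  · rw [if_neg hC]
    exact Finset.sum_eq_zero fun k' _ => if_neg fun hh => hC ⟨hh.1.1, hh.2⟩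

lemma dep_pin1 (x : ℕ → 𝒳) {m n s : ℕ} (hs : s < m) (hn : n ≤ m) (kk : Fin K) :
    ∀ (z z' : ℕ → Fin K) (xs xs' : ℕ → 𝒳), (∀ i, i < m → z i = z' i) →
      (∀ i, i < m → xs i = xs' i) →
      ((z s = kk ∧ obsAgree x n z xs) ↔ (z' s = kk ∧ obsAgree x n z' xs')) := by
  intro z z' xs xs' hz hx
  constructor
  · rintro ⟨h1, h2⟩
    exact ⟨(hz s hs).symm.trans h1, fun i hi => (hx i (by omega)).symm.trans (h2 i hi)⟩
  · rintro ⟨h1, h2⟩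
    exact ⟨(hz s hs).trans h1, fun i hi => (hx i (by omega)).trans (h2 i hi)⟩

lemma dep_pin2 (x : ℕ → 𝒳) {m n s s' : ℕ} (hs : s < m) (hs' : s' < m) (hn : n ≤ m)
    (kk kk' : Fin K) :
    ∀ (z z' : ℕ → Fin K) (xs xs' : ℕ → 𝒳), (∀ i, i < m → z i = z' i) →
      (∀ i, i < m → xs i = xs' i) →
      (((z s = kk ∧ z s' = kk') ∧ obsAgree x n z xs) ↔
        ((z' s = kk ∧ z' s' = kk') ∧ obsAgree x n z' xs')) := by
  intro z z' xs xs' hz hx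
  constructor
  · rintro ⟨⟨h1, h2⟩, h3⟩
    exact ⟨⟨(hz s hs).symm.trans h1, (hz s' hs').symm.trans h2⟩,
      fun i hi => (hx i (by omega)).symm.trans (h3 i hi)⟩
  · rintro ⟨⟨h1, h2⟩, h3⟩
    exact ⟨⟨(hz s hs).trans h1, (hz s' hs').trans h2⟩,
      fun i hi => (hx i (by omega)).trans (h3 i hi)⟩

end Aux
/-- **Correctness of the backward (smoothing) recursion** (Proposition 2,
composite form): with `ζ` defined by the backward recursion initialized at the
final filtered probabilities, `ζ t k` equals the smoothed probability
`P(z_t = k | x_{1:T})` for every `t`.  Stated with 0-based internal time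
(the paper's times `1, …, T` are internal `0, …, T-1`). -/
theorem backward_algorithm_correct
    {𝒳 : Type*} [Fintype 𝒳] [Nonempty 𝒳] {K T : ℕ} [NeZero K] (hT : 1 ≤ T)
    (π : Fin K → ℝ) (A : ℕ → Fin K → (ℕ → 𝒳) → Fin K → ℝ)
    (η : ℕ → Fin K → (ℕ → 𝒳) → 𝒳 → ℝ)
    (h : IsRARHMM T π A η)
    (x : ℕ → 𝒳) (ζ : ℕ → Fin K → ℝ)
    (hlast : ∀ k : Fin K, ζ (T - 1) k =
      condProb T π A η (fun z _ => z (T - 1) = k) (obsAgree x T))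
    (hrec : ∀ t, t + 1 < T → ∀ k : Fin K, ζ t k =
      condProb T π A η (fun z _ => z t = k) (obsAgree x (t + 1)) *
        ∑ k' : Fin K, A (t + 1) k x k' * ζ (t + 1) k' /
          condProb T π A η (fun z _ => z (t + 1) = k') (obsAgree x (t + 1)))
    (hpos : ∀ t, t < T → 0 < prob T π A η (obsAgree (K := K) x (t + 1))) :
    ∀ t, t < T → ∀ k : Fin K,
      ζ t k = condProb T π A η (fun z _ => z t = k) (obsAgree x T) := by
  have main : ∀ d t, t + d + 1 = T → ∀ k : Fin K,
      ζ t k = condProb T π A η (fun z _ => z t = k) (obsAgree x T) := by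
    intro d
    induction d with
    | zero =>
      intro t htd k
      obtain rfl : t = T - 1 := by omega
      exact hlast k
    | succ d ih =>
      intro t htd k
      have ht1 : t + 1 < T := by omega
      have key : ∀ k' : Fin K,
          condProb T π A η (fun z _ => z t = k) (obsAgree x (t + 1)) *
            (A (t + 1) k x k' * ζ (t + 1) k' /
              condProb T π A η (fun z _ => z (t + 1) = k') (obsAgree x (t + 1)))
          = prob T π A η (fun z xs => (z t = k ∧ z (t + 1) = k') ∧ obsAgree x T z xs) /
              prob T π A η (obsAgree (K := K) x T) := by
        intro k'
        have e1 : condProb T π A η (fun z _ => z t = k) (obsAgree x (t + 1)) =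
            prob T π A η (fun z xs => z t = k ∧ obsAgree x (t + 1) z xs) /
              prob T π A η (obsAgree (K := K) x (t + 1)) := rfl
        have e2 : condProb T π A η (fun z _ => z (t + 1) = k') (obsAgree x (t + 1)) =
            prob T π A η (fun z xs => z (t + 1) = k' ∧ obsAgree x (t + 1) z xs) /
              prob T π A η (obsAgree (K := K) x (t + 1)) := rfl
        have eIH : ζ (t + 1) k' =
            prob T π A η (fun z xs => z (t + 1) = k' ∧ obsAgree x T z xs) /
              prob T π A η (obsAgree (K := K) x T) := ih (t + 1) (by omega) k'
        have hN : prob T π A η (obsAgree (K := K) x (t + 1)) ≠ 0 :=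
          ne_of_gt (hpos t (by omega))
        have hM : prob T π A η (obsAgree (K := K) x T) ≠ 0 := by
          have h0 := hpos (T - 1) (by omega)
          rw [show T - 1 + 1 = T by omega] at h0
          exact ne_of_gt h0
        have hαA : prob T π A η
              (fun z xs => (z t = k ∧ z (t + 1) = k') ∧ obsAgree x (t + 1) z xs)
            = A (t + 1) k x k' *
              prob T π A η (fun z xs => z t = k ∧ obsAgree x (t + 1) z xs) := by
          rw [prob_eq_of_dep h (show 1 ≤ t + 2 by omega) (show t + 2 ≤ T by omega) _
              (dep_pin2 x (show t < t + 2 by omega) (show t + 1 < t + 2 by omega)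
                (show t + 1 ≤ t + 2 by omega) k k'),
            prob_congr (fun z xs =>
              show ((z t = k ∧ z (t + 1) = k') ∧ obsAgree x (t + 1) z xs) ↔
                  (z (t + 1) = k' ∧ (z t = k ∧ obsAgree x (t + 1) z xs)) from
                ⟨fun hh => ⟨hh.1.2, hh.1.1, hh.2⟩, fun hh => ⟨⟨hh.2.1, hh.1⟩, hh.2.2⟩⟩),
            show t + 2 = t + 1 + 1 by omega,
            prob_succ_pin h (show 1 ≤ t + 1 by omega) ht1 x k k'
              (fun z xs => z t = k ∧ obsAgree x (t + 1) z xs)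
              (dep_pin1 x (show t < t + 1 by omega) (le_refl (t + 1)) k)
              (fun z xs hS => ⟨hS.1, hS.2⟩),
            ← prob_eq_of_dep h (show 1 ≤ t + 1 by omega) (show t + 1 ≤ T by omega) _
              (dep_pin1 x (show t < t + 1 by omega) (le_refl (t + 1)) k)]
        have hswap := swap_identity h x ht1 k k'
        rw [hαA] at hswap
        rw [e1, e2, eIH]
        by_cases hD : prob T π A η
            (fun z xs => z (t + 1) = k' ∧ obsAgree x (t + 1) z xs) = 0
        · have hg0 : prob T π A η (fun z xs => z (t + 1) = k' ∧ obsAgree x T z xs) = 0 := by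
            refine le_antisymm ?_ (prob_nonneg h T _)
            calc prob T π A η (fun z xs => z (t + 1) = k' ∧ obsAgree x T z xs)
                ≤ prob T π A η (fun z xs => z (t + 1) = k' ∧ obsAgree x (t + 1) z xs) :=
                  prob_mono h T (fun z xs hh => ⟨hh.1, fun i hi => hh.2 i (by omega)⟩)
              _ = 0 := hD
          have hγ0 : prob T π A η
              (fun z xs => (z t = k ∧ z (t + 1) = k') ∧ obsAgree x T z xs) = 0 := by
            refine le_antisymm ?_ (prob_nonneg h T _)
            calc prob T π A η (fun z xs => (z t = k ∧ z (t + 1) = k') ∧ obsAgree x T z xs)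
                ≤ prob T π A η (fun z xs => z (t + 1) = k' ∧ obsAgree x (t + 1) z xs) :=
                  prob_mono h T (fun z xs hh => ⟨hh.1.2, fun i hi => hh.2 i (by omega)⟩)
              _ = 0 := hD
          rw [hD, hg0, hγ0]
          simp
        · have comp : prob T π A η (fun z xs => z t = k ∧ obsAgree x (t + 1) z xs) /
              prob T π A η (obsAgree (K := K) x (t + 1)) *
              (A (t + 1) k x k' *
                (prob T π A η (fun z xs => z (t + 1) = k' ∧ obsAgree x T z xs) /
                  prob T π A η (obsAgree (K := K) x T)) /
                (prob T π A η (fun z xs => z (t + 1) = k' ∧ obsAgree x (t + 1) z xs) /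
                  prob T π A η (obsAgree (K := K) x (t + 1))))
              = A (t + 1) k x k' *
                  prob T π A η (fun z xs => z t = k ∧ obsAgree x (t + 1) z xs) *
                  prob T π A η (fun z xs => z (t + 1) = k' ∧ obsAgree x T z xs) /
                (prob T π A η (obsAgree (K := K) x T) *
                  prob T π A η (fun z xs => z (t + 1) = k' ∧ obsAgree x (t + 1) z xs)) := by
            field_simp
          rw [comp, ← hswap]
          rw [mul_comm (prob T π A η (obsAgree (K := K) x T))
            (prob T π A η (fun z xs => z (t + 1) = k' ∧ obsAgree x (t + 1) z xs)),
            mul_comm (prob T π A η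
              (fun z xs => (z t = k ∧ z (t + 1) = k') ∧ obsAgree x T z xs))
              (prob T π A η (fun z xs => z (t + 1) = k' ∧ obsAgree x (t + 1) z xs)),
            mul_div_mul_left _ _ hD]
      rw [hrec t ht1 k, Finset.mul_sum,
        Finset.sum_congr rfl fun k' _ => key k', ← Finset.sum_div,
        prob_sum_mid (t + 1) (fun z _ => z t = k) (obsAgree x T)]
      rfl
  intro t htT k
  exact main (T - t - 1) t (by omega) k

end RARHMM
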